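/- Suppose 𝐓 is a Kurepa tree and cov(M) > |B(𝐓)|, i.e., the real line cannot be covered by |B(𝐓)|-many meager sets. Then ◇(𝐓) holds. -/

import Mathlib

/-!
Split `ω₁` into countably many disjoint stationary sets `S k` (Ulam) and enumerate each level as
`T_α = {e α m | m ∈ ℕ}`. For a branch `f` and each `k`, the countably many sets
`{α ∈ S k | e α m ∈ f}` cover `S k`, so one of them is stationary: call such an `m` good for
`(f, k)`. A real `x` codes a sequence `k ↦ c_k(x)` of naturals in such a way that, for each `f`,
the reals for which `c_k(x)` is bad for `(f, k)` for every `k` form a nowhere dense set. As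
`cov(M) > |B(T)|`, some `x` lies outside all of these sets, and then `t_α := e α (c_k(x))` for
`α ∈ S k` guesses every branch on a stationary set.
-/

noncomputable section

open Cardinal Set

/-- The first uncountable ordinal `ω₁`. -/
def omega1 : Ordinal := (Cardinal.aleph 1).ord

/-- A transfinite binary sequence: a function `t : α → 2` for some ordinal `α`. -/
abbrev BinSeq : Type 1 := Σ α : Ordinal, (Set.Iio α → Bool)

namespace BinSeq

/-- The restriction `t ↾ β` of a binary sequence `t` to an initial segment of its domain. -/
def restrict (t : BinSeq) (β : Ordinal) (h : β ≤ t.1) : BinSeq :=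
  ⟨β, fun x => t.2 ⟨x.1, lt_of_lt_of_le x.2 h⟩⟩

/-- `s.sub t`: `s` is an initial segment of `t` (that is, `s ⊆ t`). -/
def sub (s t : BinSeq) : Prop := ∃ h : s.1 ≤ t.1, t.restrict s.1 h = s

/-- `s.ssub t`: `s` is a proper initial segment of `t` (that is, `s ⊊ t`). -/
def ssub (s t : BinSeq) : Prop := ∃ h : s.1 < t.1, t.restrict s.1 h.le = s

end BinSeq

/-- A candidate branch: a function `f : ω₁ → 2`. -/
abbrev BinBranch : Type 1 := Set.Iio omega1 → Bool

/-- The restriction `f ↾ α` of `f : ω₁ → 2` to an ordinal `α < ω₁`. -/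
def BinBranch.restrict (f : BinBranch) (α : Ordinal) (h : α < omega1) : BinSeq :=
  ⟨α, fun x => f ⟨x.1, lt_trans x.2 h⟩⟩

/-- `C` is a closed unbounded (club) subset of `ω₁`: it is a set of countable ordinals,
unbounded in `ω₁`, and closed under suprema of bounded nonempty subsets. -/
def IsClubBelow (C : Set Ordinal) : Prop :=
  C ⊆ Set.Iio omega1 ∧
  (∀ β < omega1, ∃ α ∈ C, β < α) ∧
  (∀ s : Set Ordinal, s ⊆ C → s.Nonempty → sSup s < omega1 → sSup s ∈ C)

/-- `S` is a stationary subset of `ω₁`: it meets every club subset of `ω₁`. -/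
def IsStationaryBelow (S : Set Ordinal) : Prop :=
  ∀ C : Set Ordinal, IsClubBelow C → (S ∩ C).Nonempty

/-- `T` is a binary ℵ₁-tree: a downward closed family of binary sequences of
countable length, all of whose levels are countable. -/
structure IsBinaryAleph1Tree (T : Set BinSeq) : Prop where
  dom_lt : ∀ t ∈ T, t.1 < omega1
  downward_closed : ∀ t ∈ T, ∀ β, ∀ h : β ≤ t.1, t.restrict β h ∈ T
  countable_levels : ∀ α < omega1, {t | t ∈ T ∧ t.1 = α}.Countable

/-- The set of cofinal branches of a binary tree:
functions `f : ω₁ → 2` all of whose initial segments lie in `T`. -/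
def BinBranches (T : Set BinSeq) : Set BinBranch :=
  {f | ∀ α, ∀ h : α < omega1, f.restrict α h ∈ T}

/-- A binary Kurepa tree: a binary ℵ₁-tree with at least ℵ₂-many cofinal branches. -/
def IsBinaryKurepa (T : Set BinSeq) : Prop :=
  IsBinaryAleph1Tree T ∧ Cardinal.aleph 2 ≤ #(↥(BinBranches T))

/-- `◇(T)` for a binary tree `T`: there is a transversal `⟨t_α | α < ω₁⟩` with `t_α ∈ T_α`
such that for every cofinal branch `f` of `T`, the set `{α < ω₁ | f ↾ α = t_α}` is stationary. -/
def BinDiamond (T : Set BinSeq) : Prop :=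
  ∃ t : Ordinal → BinSeq,
    (∀ α < omega1, t α ∈ T ∧ (t α).1 = α) ∧
    ∀ f ∈ BinBranches T,
      IsStationaryBelow {α | ∃ h : α < omega1, BinBranch.restrict f α h = t α}

/-- An abstract tree: a strict partial order in which the set of predecessors
of every point is well-ordered. -/
structure OTree where
  carrier : Type
  lt : carrier → carrier → Prop
  lt_trans : ∀ {x y z}, lt x y → lt y z → lt x z
  lt_irrefl : ∀ x, ¬ lt x x
  pred_wellOrder : ∀ x, IsWellOrder {y // lt y x} fun a b => lt a.1 b.1

namespace OTree

/-- The height of a node: the order type of its set of predecessors. -/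
def height (t : OTree) (x : t.carrier) : Ordinal :=
  @Ordinal.type {y // t.lt y x} (fun a b => t.lt a.1 b.1) (t.pred_wellOrder x)

/-- The `α`-th level of the tree. -/
def level (t : OTree) (α : Ordinal) : Set t.carrier := {x | t.height x = α}

/-- An ℵ₁-tree: a tree of height `ω₁` all of whose levels are countable. -/
def IsAleph1Tree (t : OTree) : Prop :=
  (∀ x, t.height x < omega1) ∧
  (∀ α < omega1, (t.level α).Nonempty) ∧
  (∀ α < omega1, (t.level α).Countable)

/-- A tree is Hausdorff if nodes of the same limit height
with the same predecessors are equal. -/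
def Hausdorff (t : OTree) : Prop :=
  ∀ x y : t.carrier, Order.IsSuccLimit (t.height x) → t.height x = t.height y →
    {z | t.lt z x} = {z | t.lt z y} → x = y

/-- The set of cofinal branches: uncountable maximal chains. -/
def branches (t : OTree) : Set (Set t.carrier) :=
  {C | IsMaxChain t.lt C ∧ ¬ C.Countable}

/-- A Kurepa tree: an ℵ₁-tree with at least ℵ₂-many cofinal branches. -/
def IsKurepa (t : OTree) : Prop :=
  t.IsAleph1Tree ∧ Cardinal.aleph 2 ≤ #(↥t.branches)

/-- `◇(𝐓)`: there is a transversal `⟨b_α | α < ω₁⟩` with `b_α ∈ T_α` such that for every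
cofinal branch `f`, the set `{α < ω₁ | f ↾ α = b_α}` (i.e. the set of `α < ω₁` such that
`b_α` is the unique element of `f` on the `α`-th level) is stationary. -/
def Diamond (t : OTree) : Prop :=
  ∃ b : Ordinal → t.carrier,
    (∀ α < omega1, b α ∈ t.level α) ∧
    ∀ f ∈ t.branches,
      IsStationaryBelow {α | α < omega1 ∧ f ∩ t.level α = {b α}}

/-- A tree has height `ω₁` if every node has countable height
and every countable level is nonempty. -/
def HasHeightOmega1 (t : OTree) : Prop :=
  (∀ x, t.height x < omega1) ∧ ∀ α < omega1, (t.level α).Nonempty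

end OTree

universe u

open Function

theorem omega1_isSuccLimit : Order.IsSuccLimit omega1.{u} :=
  Cardinal.isSuccLimit_ord (Cardinal.aleph0_le_aleph 1)

theorem cof_Iio_omega1_ne_aleph0 : Order.cof (Iio omega1.{u}) ≠ ℵ₀ := by
  rw [Ordinal.cof_Iio, ← Ordinal.lift_cof, omega1, Cardinal.isRegular_aleph_one.cof_ord]
  simpa using Cardinal.aleph0_lt_aleph_one.ne'

theorem csSup_image_val_of_isLUB {o : Ordinal.{u}} {d : Set (Iio o)} {a : Iio o} (hd : d.Nonempty)
    (ha : IsLUB d a) : sSup (((↑) : Iio o → Ordinal) '' d) = a := by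
  refine le_antisymm (csSup_le (hd.image _) (forall_mem_image.2 fun x hx => ha.1 hx)) ?_
  by_contra! h
  have hub : (⟨_, h.trans a.2⟩ : Iio o) ∈ upperBounds d := fun x hx =>
    le_csSup Ordinal.bddAbove_of_small (mem_image_of_mem _ hx)
  exact h.not_ge (ha.2 hub)

theorem IsClubBelow.isClub_preimage_val {C : Set Ordinal.{u}} (hC : IsClubBelow C) :
    IsClub (((↑) : Iio omega1 → Ordinal) ⁻¹' C) where
  dirSupClosed d hdC hd _ a ha := by
    have hsup := csSup_image_val_of_isLUB hd ha
    rw [mem_preimage, ← hsup]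
    exact hC.2.2 _ (image_subset_iff.2 hdC) (hd.image _) (hsup ▸ a.2)
  isCofinal a := by
    obtain ⟨β, hβC, hβ⟩ := hC.2.1 a a.2
    exact ⟨⟨β, hC.1 hβC⟩, hβC, hβ.le⟩

theorem IsStationaryBelow.of_isStationary_preimage_val {S : Set Ordinal.{u}}
    (hS : IsStationary (((↑) : Iio omega1 → Ordinal) ⁻¹' S)) : IsStationaryBelow S := fun _C hC =>
  (hS hC.isClub_preimage_val).image _ |>.mono (by rintro _ ⟨α, ⟨hS, hC⟩, rfl⟩; exact ⟨hS, hC⟩)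

theorem countable_Iio_of_lt_omega1 {β : Ordinal.{u}} (hβ : β < omega1) : (Iio β).Countable := by
  rw [← Cardinal.le_aleph0_iff_set_countable, Cardinal.mk_Iio_ordinal, Cardinal.lift_le_aleph0,
    ← Order.lt_succ_iff, Cardinal.succ_aleph0, ← Cardinal.lt_ord]
  exact hβ

theorem not_countable_Iio_omega1 : ¬ (Iio omega1.{u}).Countable := by
  rw [← Cardinal.le_aleph0_iff_set_countable, Cardinal.mk_Iio_ordinal, Cardinal.lift_le_aleph0,
    omega1, Cardinal.card_ord]
  exact Cardinal.aleph0_lt_aleph_one.not_ge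

theorem isStationary_Ioi_omega1 (α : Iio omega1.{u}) : IsStationary (Ioi α) := by
  refine .of_not_isCofinal_compl fun h => ?_
  obtain ⟨β, hβ, hle⟩ := h ⟨Order.succ α.1, omega1_isSuccLimit.succ_lt α.2⟩
  exact (Order.lt_succ α.1).not_ge (hle.trans (not_lt.1 hβ))

/-- Ulam's argument: with `I β` an injection of `β` into `ℕ`, the row `{β > α | I β α = n}`, `n ∈ ℕ`,
of the Ulam matrix covers `Ioi α`, so some entry `n α` of it is stationary. Infinitely many `α`
share one value `n α = n₀`, and the entries of column `n₀` are disjoint as each `I β` is injective.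
-/
theorem exists_pairwise_disjoint_isStationary_omega1 :
    ∃ S : ℕ → Set (Iio omega1.{u}), (∀ k, IsStationary (S k)) ∧ Pairwise (Disjoint on S) := by
  choose I hI using fun β : Iio omega1.{u} => Set.countable_iff_exists_injOn.1
    ((countable_Iio_of_lt_omega1 β.2).preimage Subtype.val_injective)
  have hrow : ∀ α, ∃ n, IsStationary {β | α < β ∧ I β α = n} := fun α => by
    rw [← isStationary_iUnion_iff_of_countable cof_Iio_omega1_ne_aleph0]
    exact (isStationary_Ioi_omega1 α).mono fun β hβ => mem_iUnion.2 ⟨_, hβ, rfl⟩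
  choose n hn using hrow
  obtain ⟨n₀, hn₀⟩ : ∃ n₀, (n ⁻¹' {n₀}).Infinite := by
    by_contra! h
    refine not_countable_Iio_omega1 (countable_coe_iff.1 (countable_univ_iff.1 ?_))
    exact (countable_iUnion fun k => (h k).countable).mono fun α _ => mem_iUnion.2 ⟨n α, rfl⟩
  let e := hn₀.natEmbedding
  refine ⟨fun k => {β | (e k : Iio omega1) < β ∧ I β (e k) = n₀}, fun k => ?_, fun k l hkl => ?_⟩
  · simpa only [show n (e k) = n₀ from (e k).2] using hn (e k)
  · refine disjoint_left.2 fun β ⟨hkβ, hk⟩ ⟨hlβ, hl⟩ => hkl (e.injective (Subtype.ext ?_))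
    exact hI β hkβ hlβ (hk.trans hl.symm)

theorem exists_isStationary_fibers_omega1 :
    ∃ π : Iio omega1.{u} → ℕ, ∀ k, IsStationary (π ⁻¹' {k}) := by
  classical
  obtain ⟨S, hS, hdisj⟩ := exists_pairwise_disjoint_isStationary_omega1
  refine ⟨fun α => if h : ∃ k, α ∈ S k then h.choose else 0, fun k => (hS k).mono fun α hα => ?_⟩
  have h : ∃ k, α ∈ S k := ⟨k, hα⟩
  simp only [mem_preimage, dif_pos h, mem_singleton_iff]
  by_contra hne
  exact disjoint_left.1 (hdisj hne) h.choose_spec hα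

theorem isNowhereDense_setOf_forall_mem {X ι β : Type*} [TopologicalSpace X] {c : X → ι → β}
    (hc : ∀ U : Set X, IsOpen U → U.Nonempty →
      ∃ k, ∀ m, ∃ V ⊆ U, IsOpen V ∧ V.Nonempty ∧ ∀ x ∈ V, c x k = m)
    {E : ι → Set β} (hE : ∀ k, E k ≠ Set.univ) : IsNowhereDense {x | ∀ k, c x k ∈ E k} := by
  rw [IsNowhereDense, ← not_nonempty_iff_eq_empty]
  intro hne
  obtain ⟨k, hk⟩ := hc _ isOpen_interior hne
  obtain ⟨m, hm⟩ := (ne_univ_iff_exists_notMem _).1 (hE k)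
  obtain ⟨V, hVU, hV, ⟨y, hyV⟩, hVm⟩ := hk m
  obtain ⟨x, hxV, hx⟩ := mem_closure_iff.1 (interior_subset (hVU hyV)) V hV hyV
  exact hm (hVm x hxV ▸ hx k)

/-- The `k`-th coordinate of `x` is `⌊1 / y⌋ - 1` for `y` the fractional part of `k x`. It equals
`m` wherever `y ∈ (1 / (m + 2), 1 / (m + 1))`, so it takes every value on every interval of length
greater than `2 / k`. -/
def realCode (x : ℝ) (k : ℕ) : ℕ := ⌊(Int.fract (x * k))⁻¹⌋₊ - 1

theorem realCode_eq {x : ℝ} {k m : ℕ} {n : ℤ}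
    (hx : x * k - n ∈ Ioo (1 / (m + 2 : ℝ)) (1 / (m + 1))) : realCode x k = m := by
  obtain ⟨h1, h2⟩ := hx
  have hpos : 0 < x * k - n := lt_trans (by positivity) h1
  have hfract : Int.fract (x * k) = x * k - n :=
    Int.fract_eq_iff.2 ⟨hpos.le, h2.trans_le (by
      rw [div_le_one (by positivity)]; simp), n, by ring⟩
  have hfloor : ⌊(x * k - n)⁻¹⌋₊ = m + 1 := by
    rw [Nat.floor_eq_iff (by positivity), ← one_div]
    push_cast
    exact ⟨((lt_one_div hpos (by positivity)).1 h2).le,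
      by linarith [(one_div_lt (by positivity) hpos).1 h1]⟩
  rw [realCode, hfract, hfloor, Nat.add_sub_cancel]

theorem exists_isOpen_subset_realCode_eq {U : Set ℝ} (hU : IsOpen U) (hne : U.Nonempty) :
    ∃ k, ∀ m, ∃ V ⊆ U, IsOpen V ∧ V.Nonempty ∧ ∀ x ∈ V, realCode x k = m := by
  obtain ⟨a, b, hab, habU⟩ := hU.exists_Ioo_subset hne
  obtain ⟨k, hk⟩ := exists_nat_gt (2 / (b - a))
  have hk0 : (0 : ℝ) < k := (by have := sub_pos.2 hab; positivity : (0:ℝ) < 2 / (b - a)).trans hk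
  have hkba : 2 < (b - a) * k := by rwa [div_lt_iff₀' (sub_pos.2 hab)] at hk
  set n : ℤ := ⌊a * k⌋ + 1
  have hnlt : a * k < n := by simp [n, Int.lt_floor_add_one]
  have hnle : (n : ℝ) ≤ a * k + 1 := by simpa [n] using Int.floor_le (a * k)
  have hVcode : ∀ m : ℕ, ∀ x ∈ Ioo ((n + 1 / (m + 2 : ℝ)) / k) ((n + 1 / (m + 1)) / k),
      x * k - n ∈ Ioo (1 / (m + 2 : ℝ)) (1 / (m + 1)) := fun m x ⟨h1, h2⟩ => by
    rw [div_lt_iff₀ hk0] at h1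
    rw [lt_div_iff₀ hk0] at h2
    constructor <;> linarith
  refine ⟨k, fun m => ⟨_, fun x hx => habU ?_, isOpen_Ioo, nonempty_Ioo.2 ?_,
    fun x hx => realCode_eq (hVcode m x hx)⟩⟩
  · obtain ⟨h1, h2⟩ := hVcode m x hx
    have hm1 : 1 / (m + 1 : ℝ) ≤ 1 := by rw [div_le_one (by positivity)]; simp
    have hm2 : 0 < 1 / (m + 2 : ℝ) := by positivity
    constructor <;> nlinarith
  · gcongr
    simp

theorem exists_code_forall_isStationary_mem {ι : Type*}
    (hcov : ∀ F : ι → Set ℝ, (∀ i, IsMeagre (F i)) → ⋃ i, F i ≠ Set.univ)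
    (G : ι → Iio omega1.{u} → Set ℕ) (hG : ∀ i α, (G i α).Nonempty) :
    ∃ code : Iio omega1.{u} → ℕ, ∀ i, IsStationary {α | code α ∈ G i α} := by
  obtain ⟨π, hπ⟩ := exists_isStationary_fibers_omega1
  set E : ι → ℕ → Set ℕ := fun i k => {m | ¬ IsStationary (π ⁻¹' {k} ∩ {α | m ∈ G i α})}
  have hE : ∀ i k, E i k ≠ Set.univ := fun i k => by
    have hcover : π ⁻¹' {k} ⊆ ⋃ m, π ⁻¹' {k} ∩ {α | m ∈ G i α} := fun α hα =>
      mem_iUnion.2 ((hG i α).imp fun _ hm => ⟨hα, hm⟩)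
    obtain ⟨m, hm⟩ := (isStationary_iUnion_iff_of_countable cof_Iio_omega1_ne_aleph0).1
      ((hπ k).mono hcover)
    exact (ne_univ_iff_exists_notMem _).2 ⟨m, not_not.2 hm⟩
  obtain ⟨x, hx⟩ : ∃ x, ∀ i, ∃ k, realCode x k ∉ E i k := by
    simpa [eq_univ_iff_forall] using hcov _ fun i =>
      (isNowhereDense_setOf_forall_mem (fun _ => exists_isOpen_subset_realCode_eq) (hE i)).isMeagre
  refine ⟨fun α => realCode x (π α), fun i => ?_⟩
  obtain ⟨k, hk⟩ := hx i
  refine (not_not.1 hk).mono ?_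
  rintro α ⟨hα, hαG⟩
  rw [mem_preimage, mem_singleton_iff] at hα
  simpa [hα] using hαG

namespace OTree

variable (t : OTree)

theorem height_eq_typein {x y : t.carrier} (h : t.lt y x) :
    t.height y = @Ordinal.typein _ (fun a b : {z // t.lt z x} => t.lt a.1 b.1)
      (t.pred_wellOrder x) ⟨y, h⟩ := by
  let := t.pred_wellOrder x
  let := t.pred_wellOrder y
  rw [← Ordinal.type_subrel]
  exact RelIso.ordinalType_congr
    { toFun := fun z => ⟨⟨z.1, t.lt_trans z.2 h⟩, z.2⟩
      invFun := fun z => ⟨z.1.1, z.2⟩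
      left_inv := fun _ => rfl
      right_inv := fun _ => rfl
      map_rel_iff' := Iff.rfl }

theorem height_lt_height {x y : t.carrier} (h : t.lt y x) : t.height y < t.height x := by
  let := t.pred_wellOrder x
  rw [t.height_eq_typein h]
  exact Ordinal.typein_lt_type _ _

theorem exists_lt_height_eq {x : t.carrier} {α : Ordinal} (hα : α < t.height x) :
    ∃ y, t.lt y x ∧ t.height y = α := by
  let := t.pred_wellOrder x
  set y := Ordinal.enum (fun a b : {z // t.lt z x} => t.lt a.1 b.1) ⟨α, hα⟩
  exact ⟨y.1, y.2, by rw [t.height_eq_typein y.2]; exact Ordinal.typein_enum _ hα⟩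

variable {t}

theorem eq_of_height_eq {f : Set t.carrier} (hf : IsChain t.lt f) {x y : t.carrier}
    (hx : x ∈ f) (hy : y ∈ f) (hxy : t.height x = t.height y) : x = y := by
  by_contra hne
  rcases hf hx hy hne with h | h
  · exact (t.height_lt_height h).ne hxy
  · exact (t.height_lt_height h).ne' hxy

theorem mem_of_lt_of_mem {f : Set t.carrier} (hf : IsMaxChain t.lt f)
    {x y : t.carrier} (hx : x ∈ f) (hyx : t.lt y x) : y ∈ f := by
  refine hf.2 (hf.1.insert fun z hz hne => ?_) (subset_insert y f) ▸ mem_insert y f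
  rcases eq_or_ne z x with rfl | hzx
  · exact Or.inl hyx
  rcases hf.1 hz hx hzx with hzx | hxz
  · let := t.pred_wellOrder x
    rcases trichotomous_of (fun a b : {w // t.lt w x} => t.lt a.1 b.1) ⟨y, hyx⟩ ⟨z, hzx⟩ with
      h | h | h
    · exact Or.inl h
    · exact absurd (congrArg Subtype.val h) hne
    · exact Or.inr h
  · exact Or.inl (t.lt_trans hyx hxz)

theorem exists_mem_height_eq (hcount : ∀ α < omega1, (t.level α).Countable)
    {f : Set t.carrier} (hf : f ∈ t.branches) {α : Ordinal} (hα : α < omega1) :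
    ∃ x ∈ f, t.height x = α := by
  obtain ⟨x, hxf, hαx⟩ : ∃ x ∈ f, α ≤ t.height x := by
    by_contra! h
    refine hf.2 (((countable_Iio_of_lt_omega1 hα).biUnion fun β hβ =>
      hcount β ((mem_Iio.1 hβ).trans hα)).mono fun x hx => mem_iUnion₂.2 ⟨_, h x hx, rfl⟩)
  rcases hαx.eq_or_lt with rfl | hlt
  · exact ⟨x, hxf, rfl⟩
  · obtain ⟨y, hyx, rfl⟩ := t.exists_lt_height_eq hlt
    exact ⟨y, mem_of_lt_of_mem hf.1 hxf hyx, rfl⟩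

theorem inter_level_eq_singleton {f : Set t.carrier} (hf : IsChain t.lt f) {x : t.carrier}
    {α : Ordinal} (hxf : x ∈ f) (hx : x ∈ t.level α) : f ∩ t.level α = {x} :=
  eq_singleton_iff_unique_mem.2
    ⟨⟨hxf, hx⟩, fun _ hy => eq_of_height_eq hf hy.1 hxf (hy.2.trans hx.symm)⟩

end OTree

/-- If `𝐓` is a Kurepa tree and `cov(M) > |B(𝐓)|`, i.e. the real line cannot be
covered by `|B(𝐓)|`-many meager sets, then `◇(𝐓)` holds. -/
theorem statement8 (t : OTree) (h1 : t.IsKurepa)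
    (hcov : ∀ (ι : Type) (F : ι → Set ℝ), #ι ≤ #(↥t.branches) →
      (∀ i, IsMeagre (F i)) → (⋃ i, F i) ≠ Set.univ) :
    t.Diamond := by
  obtain ⟨⟨-, hne, hcount⟩, -⟩ := h1
  have : Nonempty t.carrier := ⟨(hne 0 omega1_isSuccLimit.bot_lt).some⟩
  choose! e he using fun α (hα : α < omega1) => (hcount α hα).exists_eq_range (hne α hα)
  obtain ⟨code, hcode⟩ := exists_code_forall_isStationary_mem (fun F => hcov t.branches F le_rfl)
    (fun f α => {m | e α m ∈ f.1}) fun f α => by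
      obtain ⟨x, hxf, hx⟩ := OTree.exists_mem_height_eq hcount f.2 α.2
      obtain ⟨m, rfl⟩ : x ∈ range (e α) := he α α.2 ▸ hx
      exact ⟨m, hxf⟩
  refine ⟨fun α => e α (if h : α < omega1 then code ⟨α, h⟩ else 0),
    fun α hα => he α hα ▸ mem_range_self _,
    fun f hf => .of_isStationary_preimage_val ((hcode ⟨f, hf⟩).mono fun α hα => ⟨α.2, ?_⟩)⟩
  have hlevel : e α (code α) ∈ t.level α := he α α.2 ▸ mem_range_self _
  simpa only [dif_pos (mem_Iio.1 α.2)] using OTree.inter_level_eq_singleton hf.1.1 hα hlevel
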